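/- arXiv:2310.08081 — 6 statements merged into one kernel-verified Lean document; each statement's English description precedes it below -/
import Mathlib

section
/- For any integers m ≥ a ≥ 1 and n ≥ b ≥ 1, the maximum number Z(m,n,a,b) of edges in a bipartite graph with parts of sizes m and n containing no complete bipartite subgraph K_{a,b} (with the a vertices in the first part and the b vertices in the second part) satisfies Z(m,n,a,b) ≤ (b-1)^{1/a} · m · n^{1-1/a} + (a-1)·n. -/
/-!
Let `d j` be the degree of the vertex `j` of the second class. An `a`-set of the first class lies
in at most `b - 1` neighbourhoods, so counting the pairs `(A, j)` with `A ⊆ N(j)` gives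
`∑ j, (d j).choose a ≤ (b - 1) * m.choose a`. As `(d + 1 - a) ^ a ≤ a! * d.choose a` and
`a! * m.choose a ≤ m ^ a`, this yields `∑ j, (d j + 1 - a) ^ a ≤ (b - 1) * m ^ a`, and the power
mean inequality `(∑ x) ^ a ≤ n ^ (a - 1) * ∑ x ^ a` turns it into
`∑ j, (d j + 1 - a) ≤ (b - 1) ^ (1 / a) * m * n ^ (1 - 1 / a)`. The term `(a - 1) * n` pays for
the truncation `d j ≤ (d j + 1 - a) + (a - 1)`.
-/

open Finset

theorem Real.le_rpow_mul_mul_rpow_of_pow_le {x c m n : ℝ} {a : ℕ} (hx : 0 ≤ x) (hc : 0 ≤ c)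
    (hm : 0 ≤ m) (hn : 0 ≤ n) (ha : a ≠ 0) (h : x ^ a ≤ c * m ^ a * n ^ (a - 1)) :
    x ≤ c ^ (1 / a : ℝ) * m * n ^ (1 - 1 / a : ℝ) := by
  calc x = (x ^ a) ^ (1 / a : ℝ) := by rw [one_div, Real.pow_rpow_inv_natCast hx ha]
    _ ≤ (c * m ^ a * n ^ (a - 1)) ^ (1 / a : ℝ) := by gcongr
    _ = c ^ (1 / a : ℝ) * m * n ^ (1 - 1 / a : ℝ) := by
      rw [Real.mul_rpow (by positivity) (by positivity), Real.mul_rpow hc (by positivity),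
        one_div, Real.pow_rpow_inv_natCast hm ha, ← Real.rpow_natCast n, ← Real.rpow_mul hn,
        Nat.cast_pred (Nat.pos_of_ne_zero ha), sub_mul, one_mul,
        mul_inv_cancel₀ (by positivity)]

theorem Finset.sum_pow_add_one_sub_le_of_sum_choose_le {ι : Type*} (s : Finset ι) (d : ι → ℕ)
    {a c m : ℕ} (h : ∑ j ∈ s, (d j).choose a ≤ c * m.choose a) :
    ∑ j ∈ s, (d j + 1 - a) ^ a ≤ c * m ^ a := by
  have hpow_le : ∀ k, (k + 1 - a) ^ a ≤ a.factorial * k.choose a := fun k => by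
    rw [← Nat.descFactorial_eq_factorial_mul_choose]
    exact Nat.pow_sub_le_descFactorial k a
  calc ∑ j ∈ s, (d j + 1 - a) ^ a ≤ a.factorial * ∑ j ∈ s, (d j).choose a := by
        rw [mul_sum]; exact sum_le_sum fun j _ => hpow_le (d j)
    _ ≤ a.factorial * (c * m.choose a) := by gcongr
    _ = c * m.descFactorial a := by rw [Nat.descFactorial_eq_factorial_mul_choose]; ring
    _ ≤ c * m ^ a := by gcongr; exact Nat.descFactorial_le_pow m a

theorem Finset.sum_le_of_sum_choose_le {ι : Type*} (s : Finset ι) (d : ι → ℕ) {a c m : ℕ}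
    (ha : a ≠ 0) (h : ∑ j ∈ s, (d j).choose a ≤ c * m.choose a) :
    (∑ j ∈ s, d j : ℝ) ≤ (c : ℝ) ^ (1 / a : ℝ) * m * (#s : ℝ) ^ (1 - 1 / a : ℝ) + (a - 1) * #s := by
  set y : ι → ℝ := fun j => ((d j + 1 - a : ℕ) : ℝ)
  have hy : ∀ j ∈ s, 0 ≤ y j := fun j _ => Nat.cast_nonneg _
  have hpow : (∑ j ∈ s, y j) ^ a ≤ c * m ^ a * #s ^ (a - 1) := by
    obtain ⟨k, rfl⟩ := Nat.exists_eq_add_one_of_ne_zero ha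
    calc (∑ j ∈ s, y j) ^ (k + 1) ≤ #s ^ k * ∑ j ∈ s, y j ^ (k + 1) :=
          pow_sum_le_card_mul_sum_pow hy k
      _ ≤ #s ^ k * (c * m ^ (k + 1)) := by
          gcongr
          simp only [y]
          exact_mod_cast sum_pow_add_one_sub_le_of_sum_choose_le s d h
      _ = c * m ^ (k + 1) * #s ^ (k + 1 - 1) := by rw [Nat.add_sub_cancel]; ring
  have hroot := Real.le_rpow_mul_mul_rpow_of_pow_le (sum_nonneg hy) (Nat.cast_nonneg c)
    (Nat.cast_nonneg m) (Nat.cast_nonneg #s) ha hpow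
  have hsplit : (∑ j ∈ s, d j : ℝ) ≤ ∑ j ∈ s, y j + (a - 1) * #s := by
    rw [← Nat.cast_pred (Nat.pos_of_ne_zero ha), mul_comm, ← nsmul_eq_mul, ← sum_const,
      ← sum_add_distrib]
    simp only [y]
    exact_mod_cast sum_le_sum fun j _ => by omega
  linarith

section Bipartite

variable {α β : Type*} [Fintype β] (E : α → β → Prop) [∀ i j, Decidable (E i j)]

def commonNbhd (A : Finset α) : Finset β := {j | ∀ i ∈ A, E i j}

theorem ncard_setOf_eq_sum_card_filter [Fintype α] :
    {p : α × β | E p.1 p.2}.ncard = ∑ j, #{i | E i j} := by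
  rw [Set.ncard_eq_toFinset_card', Set.toFinset_ofPred, card_filter, Fintype.sum_prod_type_right]
  simp only [card_filter]

theorem card_commonNbhd_lt_of_not_exists_complete {a b : ℕ}
    (hfree : ¬ ∃ (S : Finset α) (T : Finset β), #S = a ∧ #T = b ∧ ∀ i ∈ S, ∀ j ∈ T, E i j)
    {A : Finset α} (hA : #A = a) : #(commonNbhd E A) < b := by
  by_contra! hle
  obtain ⟨T, hTsub, hT⟩ := exists_subset_card_eq hle
  exact hfree ⟨A, T, hA, hT, fun i hi j hj => (mem_filter.1 (hTsub hj)).2 i hi⟩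

theorem sum_choose_card_filter_le_of_card_commonNbhd_le [Fintype α] [DecidableEq α] {a c : ℕ}
    (h : ∀ A : Finset α, #A = a → #(commonNbhd E A) ≤ c) :
    ∑ j, (#{i | E i j}).choose a ≤ c * (Fintype.card α).choose a := by
  let r : Finset α → β → Prop := fun A j => ∀ i ∈ A, E i j
  have hbelow : ∀ j, (univ.powersetCard a).bipartiteBelow r j = powersetCard a {i | E i j} := by
    intro j; ext A
    simp [r, and_comm, subset_iff]
  have habove : ∀ A, univ.bipartiteAbove r A = commonNbhd E A := by
    intro A; ext j
    simp [r, commonNbhd]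
  calc ∑ j, (#{i | E i j}).choose a
        = ∑ j, #((univ.powersetCard a).bipartiteBelow r j) := by
          simp only [hbelow, card_powersetCard]
    _ = ∑ A ∈ univ.powersetCard a, #(commonNbhd E A) := by
          rw [← sum_card_bipartiteAbove_eq_sum_card_bipartiteBelow]
          simp only [habove]
    _ ≤ ∑ A ∈ univ.powersetCard a, c :=
          sum_le_sum fun A hA => h A (mem_powersetCard.1 hA).2
    _ = c * (Fintype.card α).choose a := by
          rw [sum_const, card_powersetCard, card_univ, smul_eq_mul, mul_comm]

end Bipartite

theorem stmt_0_general (m n a b : ℕ) (ha : 1 ≤ a) (hb : 1 ≤ b)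
    (E : Fin m → Fin n → Prop)
    (hfree : ¬ ∃ (S : Finset (Fin m)) (T : Finset (Fin n)),
      S.card = a ∧ T.card = b ∧ ∀ i ∈ S, ∀ j ∈ T, E i j) :
    (Set.ncard {p : Fin m × Fin n | E p.1 p.2} : ℝ) ≤
      ((b : ℝ) - 1) ^ ((1 : ℝ) / a) * m * (n : ℝ) ^ (1 - (1 : ℝ) / a)
        + ((a : ℝ) - 1) * n := by
  classical
  have hchoose : ∑ j, (#{i | E i j}).choose a ≤ (b - 1) * m.choose a := by
    simpa using sum_choose_card_filter_le_of_card_commonNbhd_le E fun A hA =>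
      Nat.le_sub_one_of_lt (card_commonNbhd_lt_of_not_exists_complete E hfree hA)
  have hedges := sum_le_of_sum_choose_le univ _ (Nat.one_le_iff_ne_zero.1 ha) hchoose
  rw [ncard_setOf_eq_sum_card_filter]
  simpa [Nat.cast_pred hb] using hedges

/-- Kővári–Sós–Turán / Zarankiewicz bound: any bipartite graph with parts of sizes `m` and `n`
containing no `K_{a,b}` (with the `a` vertices in the first part) has at most
`(b-1)^(1/a) * m * n^(1-1/a) + (a-1) * n` edges. -/
theorem stmt_0 (m n a b : ℕ) (ha : 1 ≤ a) (hb : 1 ≤ b) (ham : a ≤ m) (hbn : b ≤ n)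
    (E : Fin m → Fin n → Prop)
    (hfree : ¬ ∃ (S : Finset (Fin m)) (T : Finset (Fin n)),
      S.card = a ∧ T.card = b ∧ ∀ i ∈ S, ∀ j ∈ T, E i j) :
    (Set.ncard {p : Fin m × Fin n | E p.1 p.2} : ℝ) ≤
      ((b : ℝ) - 1) ^ ((1 : ℝ) / a) * m * (n : ℝ) ^ (1 - (1 : ℝ) / a)
        + ((a : ℝ) - 1) * n :=
  stmt_0_general m n a b ha hb E hfree
end

section
/- Let r ≥ 2 be a fixed integer. For all sufficiently large n, if s < n and n₁ + ... + n_r = n are positive integers with Σ_{1≤i<j≤r} n_i·n_j ≥ t_r(n) - s, then ⌊n/r⌋ - s ≤ n_i ≤ ⌈n/r⌉ + s for every i ∈ [r]. -/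
/-!
Write `n = r q + b` with `0 ≤ b < r`. Counting pairs, `2 Σ_{i<j} n_i n_j = n² - Σ n_i²` and
`2 t_r(n) = n² - (r q² + 2 q b + b)`, so the hypothesis says `Σ n_i² ≤ r q² + 2 q b + b + 2 s`.
For every integer `a`, `Σ (n_i - a)(n_i - a - 1) = Σ n_i² - (2a + 1) n + r a (a + 1)`, a sum of
nonnegative terms; taking `a = q` (and `a = q - 1` when `r ∣ n`) its value is at most `2 s`, and a
single term `t (t - 1) ≤ 2 s` forces `-s ≤ t ≤ s + 1`.
-/

open SimpleGraph Finset

theorem two_mul_card_edgeFinset_turanGraph_mul_add {r b : ℕ} (hb : b < r) (q : ℕ) :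
    2 * #(turanGraph (r * q + b) r).edgeFinset + (r * q ^ 2 + 2 * q * b + b) =
      (r * q + b) ^ 2 := by
  have two_mul_choose_two (m : ℕ) : 2 * m.choose 2 = m * (m - 1) := by
    rw [Nat.choose_two_right, Nat.mul_div_cancel' (Nat.even_mul_pred_self m).two_dvd]
  induction q with
  | zero =>
    simp only [card_edgeFinset_turanGraph, Nat.mod_eq_of_lt hb, mul_zero, zero_add, tsub_self,
      zero_mul, Nat.zero_div, two_mul_choose_two]
    cases b <;> simp [sq, Nat.mul_succ]
  | succ q ih =>
    obtain ⟨k, rfl⟩ : ∃ k, r = k + 1 := ⟨r - 1, by omega⟩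
    have hk : 2 * (k + 1).choose 2 = (k + 1) * k := two_mul_choose_two (k + 1)
    rw [show (k + 1) * (q + 1) + b = (k + 1) * q + b + (k + 1) by ring,
      card_edgeFinset_turanGraph_add, Nat.add_sub_cancel]
    nlinarith [ih, hk]

theorem sq_sum_eq_two_mul_sum_lt_add_sum_sq {ι R : Type*} [LinearOrder ι] [Fintype ι]
    [CommSemiring R] (x : ι → R) :
    (∑ i, x i) ^ 2 = 2 * ∑ p ∈ univ.filter (fun p : ι × ι => p.1 < p.2), x p.1 * x p.2 +
      ∑ i, x i ^ 2 := by
  have hsplit (p : ι × ι) : x p.1 * x p.2 = (if p.1 < p.2 then x p.1 * x p.2 else 0) +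
      (if p.2 < p.1 then x p.2 * x p.1 else 0) + if p.1 = p.2 then x p.1 ^ 2 else 0 := by
    rcases lt_trichotomy p.1 p.2 with h | h | h
    · simp [h, h.ne, h.not_gt]
    · simp [h, sq]
    · simp [h, h.ne', h.not_gt, mul_comm]
  have hswap : ∑ p : ι × ι, (if p.2 < p.1 then x p.2 * x p.1 else 0) =
      ∑ p : ι × ι, (if p.1 < p.2 then x p.1 * x p.2 else 0) :=
    Fintype.sum_equiv (Equiv.prodComm ι ι) _ _ fun _ => rfl
  have hdiag : ∑ p : ι × ι, (if p.1 = p.2 then x p.1 ^ 2 else 0) = ∑ i, x i ^ 2 := by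
    simp [Fintype.sum_prod_type]
  rw [sq, sum_mul_sum, ← Fintype.sum_prod_type', Fintype.sum_congr _ _ hsplit, sum_add_distrib,
    sum_add_distrib, hswap, hdiag, ← two_mul, sum_filter]

theorem sum_sub_mul_sub_sub_one {ι : Type*} (s : Finset ι) (x : ι → ℤ) (a : ℤ) :
    ∑ j ∈ s, (x j - a) * (x j - a - 1) =
      ∑ j ∈ s, x j ^ 2 - (2 * a + 1) * ∑ j ∈ s, x j + #s * (a * (a + 1)) := by
  rw [mul_sum, ← nsmul_eq_mul, ← sum_const, ← sum_sub_distrib, ← sum_add_distrib]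
  exact sum_congr rfl fun _ _ => by ring

theorem neg_le_and_le_add_one_of_mul_sub_one_le {t s : ℤ} (h : t * (t - 1) ≤ 2 * s) :
    -s ≤ t ∧ t ≤ s + 1 := by
  constructor
  · nlinarith [sq_nonneg (2 * t + 1)]
  · nlinarith [sq_nonneg (2 * t - 3)]

theorem sub_le_and_le_add_of_sum_sq_le {ι : Type*} [Fintype ι] {x : ι → ℤ} {a s : ℤ}
    (h : ∑ j, x j ^ 2 + Fintype.card ι * (a * (a + 1)) ≤ (2 * a + 1) * ∑ j, x j + 2 * s) (i : ι) :
    a - s ≤ x i ∧ x i ≤ a + 1 + s := by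
  have hi : (x i - a) * (x i - a - 1) ≤ 2 * s := calc
    _ ≤ ∑ j, (x j - a) * (x j - a - 1) :=
      single_le_sum (fun j _ => by nlinarith [Int.le_self_sq (x j - a)]) (mem_univ i)
    _ ≤ 2 * s := by rw [sum_sub_mul_sub_sub_one, card_univ]; linarith
  have := neg_le_and_le_add_one_of_mul_sub_one_le hi
  omega

theorem div_le_add_and_le_add_of_sum_sq_le {ι : Type*} [Fintype ι] {x : ι → ℕ} {n r s : ℕ}
    (hr : Fintype.card ι = r) (hn : ∑ j, x j = n)
    (h : ∑ j, x j ^ 2 ≤ r * (n / r) ^ 2 + 2 * (n / r) * (n % r) + n % r + 2 * s) (i : ι) :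
    n / r ≤ x i + s ∧ x i ≤ (n + r - 1) / r + s := by
  set q := n / r
  set b := n % r
  have hr0 : 0 < r := hr ▸ Fintype.card_pos_iff.2 ⟨i⟩
  have hnqb : r * q + b = n := Nat.div_add_mod n r
  have hbr : b < r := Nat.mod_lt n hr0
  have hnZ : ∑ j, (x j : ℤ) = r * q + b := by exact_mod_cast hn.trans hnqb.symm
  have hZ : ∑ j, (x j : ℤ) ^ 2 ≤ r * q ^ 2 + 2 * q * b + b + 2 * s := by exact_mod_cast h
  have hlow := sub_le_and_le_add_of_sum_sq_le (a := q) (s := s)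
    (by rw [hr, hnZ]; linarith) i
  refine ⟨by omega, ?_⟩
  rcases Nat.eq_zero_or_pos b with hb | hb
  · have hceil : q ≤ (n + r - 1) / r := Nat.div_le_div_right (by omega)
    have hup := sub_le_and_le_add_of_sum_sq_le (a := q - 1) (s := s)
      (by rw [hr, hnZ]; simp only [hb, Nat.cast_zero] at hZ ⊢; linarith) i
    omega
  · have hceil : q + 1 ≤ (n + r - 1) / r := by
      rw [Nat.le_div_iff_mul_le hr0, add_mul, one_mul, mul_comm]
      omega
    omega

theorem stmt_5_general (r : ℕ) :
    ∃ N : ℕ, ∀ n, N ≤ n → ∀ s : ℕ, s < n → ∀ x : Fin r → ℕ,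
      (∀ i, 1 ≤ x i) → (∑ i, x i) = n →
      (turanGraph n r).edgeFinset.card ≤
        (∑ p ∈ Finset.univ.filter (fun p : Fin r × Fin r => p.1 < p.2), x p.1 * x p.2) + s →
      ∀ i, n / r ≤ x i + s ∧ x i ≤ (n + r - 1) / r + s := by
  refine ⟨0, fun n _ s _ x _ hn hcard i => ?_⟩
  have hr : 0 < r := i.pos
  have hT := two_mul_card_edgeFinset_turanGraph_mul_add (Nat.mod_lt n hr) (n / r)
  rw [Nat.div_add_mod] at hT
  have hE := sq_sum_eq_two_mul_sum_lt_add_sum_sq x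
  rw [hn] at hE
  exact div_le_add_and_le_add_of_sum_sq_le (Fintype.card_fin r) hn (by omega) i

/-- If `n₁ + ⋯ + n_r = n` and `Σ_{i<j} n_i n_j ≥ t_r(n) - s` with `s < n`, then every part size
`n_i` satisfies `⌊n/r⌋ - s ≤ n_i ≤ ⌈n/r⌉ + s` (for `n` sufficiently large). -/
theorem stmt_5 (r : ℕ) (hr : 2 ≤ r) :
    ∃ N : ℕ, ∀ n, N ≤ n → ∀ s : ℕ, s < n → ∀ x : Fin r → ℕ,
      (∀ i, 1 ≤ x i) → (∑ i, x i) = n →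
      (turanGraph n r).edgeFinset.card ≤
        (∑ p ∈ Finset.univ.filter (fun p : Fin r × Fin r => p.1 < p.2), x p.1 * x p.2) + s →
      ∀ i, n / r ≤ x i + s ∧ x i ≤ (n + r - 1) / r + s :=
  stmt_5_general r
end

section
/- Let G be a graph with m edges and let F be a graph on f vertices with minimum degree at least 1 and matching number ν(F). Then the number of copies of F in G is at most C_F · m^{f - ν(F)} for a constant C_F depending only on F. -/
/-- The number of matchings of size `k` (sets of `k` pairwise vertex-disjoint edges) in `G`. -/
noncomputable def matchingCount {V : Type*} (G : SimpleGraph V) (k : ℕ) : ℕ :=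
  Set.ncard {s : Finset (Sym2 V) | s.card = k ∧ ↑s ⊆ G.edgeSet ∧
    ∀ e ∈ s, ∀ f ∈ s, e ≠ f → ∀ v, v ∈ e → v ∉ f}

/-- The matching number of `F`: the largest size of a matching in `F`. -/
noncomputable def matchNum {W : Type*} [Fintype W] (F : SimpleGraph W) : ℕ :=
  Nat.findGreatest (fun k => 0 < matchingCount F k) (Fintype.card W)

/-- The number of copies of `F` in `G`, counted as edge subsets of `G` which induce (on the
vertices they cover) a graph isomorphic to `F`. -/
noncomputable def copyCount {W V : Type*} (F : SimpleGraph W) (G : SimpleGraph V) : ℕ :=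
  Set.ncard {A : Finset (Sym2 V) | ↑A ⊆ G.edgeSet ∧
    Nonempty (F ≃g ((SimpleGraph.fromEdgeSet (↑A : Set (Sym2 V))).induce
      {v : V | ∃ e ∈ A, v ∈ e}))}

/-!
A maximum matching of `F`, together with one edge at each vertex it misses (minimum degree
at least one), is a set of at most `f - ν(F)` edges of `F` covering all of its vertices. An
isomorphism from `F` onto a copy `A` carries it to an `(f - ν(F))`-tuple of edges of `G` whose
endpoints include every vertex of `A`. Since `A` is then a set of pairs of at most
`2 (f - ν(F))` vertices, each of the at most `m ^ (f - ν(F))` tuples comes from boundedly many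
copies.
-/

open Finset

lemma Finset.exists_fin_range_eq_of_card_le {α : Type*} {s : Finset α} {k : ℕ}
    (hs : s.Nonempty) (hk : #s ≤ k) : ∃ t : Fin k → α, Set.range t = s := by
  obtain ⟨x₀, hx₀⟩ := hs
  refine ⟨fun i => if h : (i : ℕ) < #s then s.equivFin.symm ⟨i, h⟩ else x₀, ?_⟩
  ext x
  constructor
  · rintro ⟨i, rfl⟩
    dsimp only
    split_ifs
    exacts [(s.equivFin.symm _).2, hx₀]
  · intro hx
    let j := s.equivFin ⟨x, hx⟩
    exact ⟨⟨j, j.2.trans_le hk⟩, by simp [j]⟩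

lemma card_biUnion_toFinset_of_matching {V : Type*} [DecidableEq V]
    {M : Finset (Sym2 V)} (hM : ∀ e ∈ M, ¬e.IsDiag)
    (hdisj : ∀ e ∈ M, ∀ f ∈ M, e ≠ f → ∀ v, v ∈ e → v ∉ f) :
    #(M.biUnion Sym2.toFinset) = 2 * #M := by
  rw [card_biUnion, sum_congr rfl fun e he => Sym2.card_toFinset_of_not_isDiag e (hM e he),
    sum_const, smul_eq_mul, mul_comm]
  intro e he f hf hef
  exact disjoint_left.2 fun v hve hvf =>
    hdisj e he f hf hef v (Sym2.mem_toFinset.1 hve) (Sym2.mem_toFinset.1 hvf)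

section EdgeCover

variable {W : Type*} [Fintype W] {F : SimpleGraph W}

lemma exists_matching_card_eq_matchNum :
    ∃ M : Finset (Sym2 W), #M = matchNum F ∧ ↑M ⊆ F.edgeSet ∧
      ∀ e ∈ M, ∀ f ∈ M, e ≠ f → ∀ v, v ∈ e → v ∉ f := by
  have h₀ : 0 < matchingCount F 0 := by
    rw [matchingCount, Set.ncard_pos (Set.toFinite _)]
    exact ⟨∅, by simp⟩
  have h : 0 < matchingCount F (matchNum F) :=
    Nat.findGreatest_spec (P := fun k => 0 < matchingCount F k) (Nat.zero_le _) h₀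
  exact Set.nonempty_of_ncard_ne_zero h.ne'

lemma exists_edgeCover_card_le_of_matching (hmin : ∀ w : W, ∃ w', F.Adj w w')
    {M : Finset (Sym2 W)} (hM : ↑M ⊆ F.edgeSet)
    (hdisj : ∀ e ∈ M, ∀ f ∈ M, e ≠ f → ∀ v, v ∈ e → v ∉ f) :
    ∃ T : Finset (Sym2 W), ↑T ⊆ F.edgeSet ∧ #T ≤ Fintype.card W - #M ∧
      ∀ w, ∃ e ∈ T, w ∈ e := by
  classical
  choose nbr hnbr using hmin
  set U := univ \ M.biUnion Sym2.toFinset with hU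
  refine ⟨M ∪ U.image fun u => s(u, nbr u), ?_, ?_, ?_⟩
  · rw [coe_union, coe_image, Set.union_subset_iff]
    exact ⟨hM, Set.image_subset_iff.2 fun u _ => hnbr u⟩
  · have hcov := card_biUnion_toFinset_of_matching
      (fun e he => F.not_isDiag_of_mem_edgeSet (hM he)) hdisj
    have hUcard : #U = Fintype.card W - 2 * #M := by rw [hU, card_univ_sdiff, hcov]
    have h2M : 2 * #M ≤ Fintype.card W := hcov ▸ card_le_univ _
    calc #(M ∪ U.image _) ≤ #M + #U := (card_union_le _ _).trans (by gcongr; exact card_image_le)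
      _ ≤ Fintype.card W - #M := by omega
  · intro w
    by_cases hw : w ∈ M.biUnion Sym2.toFinset
    · obtain ⟨e, he, hwe⟩ := mem_biUnion.1 hw
      exact ⟨e, mem_union_left _ he, Sym2.mem_toFinset.1 hwe⟩
    · exact ⟨s(w, nbr w), mem_union_right _ (mem_image_of_mem _ (by simp [hU, hw])),
        Sym2.mem_mk_left _ _⟩

lemma exists_edge_tuple_covering (hmin : ∀ w : W, ∃ w', F.Adj w w') :
    ∃ σ : Fin (Fintype.card W - matchNum F) → Sym2 W,
      (∀ i, σ i ∈ F.edgeSet) ∧ ∀ w, ∃ i, w ∈ σ i := by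
  obtain ⟨M, hMcard, hM, hdisj⟩ := exists_matching_card_eq_matchNum (F := F)
  obtain ⟨T, hTF, hTcard, hTcov⟩ := exists_edgeCover_card_le_of_matching hmin hM hdisj
  rw [hMcard] at hTcard
  cases isEmpty_or_nonempty W with
  | inl _ =>
    have hk : Fintype.card W - matchNum F = 0 := by simp
    exact ⟨fun i => (Fin.cast hk i).elim0, fun i => (Fin.cast hk i).elim0, isEmptyElim⟩
  | inr hW =>
    obtain ⟨e₀, he₀, -⟩ := hTcov hW.some
    obtain ⟨σ, hσ⟩ := exists_fin_range_eq_of_card_le ⟨e₀, he₀⟩ hTcard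
    refine ⟨σ, fun i => hTF (hσ ▸ Set.mem_range_self i), fun w => ?_⟩
    obtain ⟨e, he, hwe⟩ := hTcov w
    obtain ⟨i, rfl⟩ : e ∈ Set.range σ := hσ ▸ he
    exact ⟨i, hwe⟩

end EdgeCover

lemma exists_edge_tuple_covering_of_iso {W V : Type*} {F : SimpleGraph W} {k : ℕ}
    {σ : Fin k → Sym2 W} (hσF : ∀ i, σ i ∈ F.edgeSet) (hσ : ∀ w, ∃ i, w ∈ σ i)
    {A : Finset (Sym2 V)}
    (φ : F ≃g (SimpleGraph.fromEdgeSet (↑A : Set (Sym2 V))).induce {v | ∃ e ∈ A, v ∈ e}) :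
    ∃ t : Fin k → Sym2 V, (∀ i, t i ∈ A) ∧ ∀ e ∈ A, ∀ v ∈ e, ∃ i, v ∈ t i := by
  have hmap : ∀ x ∈ F.edgeSet, x.map (fun w => (φ w : V)) ∈ A := by
    intro x hx
    induction x with
    | _ a b => exact (SimpleGraph.fromEdgeSet_adj _ |>.1 (φ.map_adj_iff.2 hx)).1
  refine ⟨fun i => (σ i).map (fun w => (φ w : V)), fun i => hmap _ (hσF i), ?_⟩
  intro e he v hv
  obtain ⟨i, hi⟩ := hσ (φ.symm ⟨v, e, he, hv⟩)
  exact ⟨i, Sym2.mem_map.2 ⟨_, hi, by simp⟩⟩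

lemma card_le_of_forall_covered {V : Type*} [DecidableEq V] {k : ℕ} (t : Fin k → Sym2 V)
    {𝒞 : Finset (Finset (Sym2 V))} (h𝒞 : ∀ A ∈ 𝒞, ∀ e ∈ A, ∀ v ∈ e, ∃ i, v ∈ t i) :
    #𝒞 ≤ 2 ^ (k * (2 * k + 1)) := by
  set X := univ.biUnion fun i => (t i).toFinset
  have hX : #X ≤ 2 * k :=
    calc #X ≤ ∑ i, #(t i).toFinset := card_biUnion_le
      _ ≤ ∑ _i : Fin k, 2 := sum_le_sum fun i _ => by
        rw [Sym2.card_toFinset]; split_ifs <;> omega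
      _ = 2 * k := by simp [mul_comm]
  have hsub : 𝒞 ⊆ X.sym2.powerset := by
    intro A hA
    rw [mem_powerset]
    intro e he
    rw [mem_sym2_iff]
    intro v hv
    obtain ⟨i, hi⟩ := h𝒞 A hA e he v hv
    exact mem_biUnion.2 ⟨i, mem_univ _, Sym2.mem_toFinset.2 hi⟩
  calc #𝒞 ≤ #X.sym2.powerset := card_le_card hsub
    _ = 2 ^ (#X + 1).choose 2 := by rw [card_powerset, card_sym2]
    _ ≤ 2 ^ (k * (2 * k + 1)) := by
      refine Nat.pow_le_pow_right two_pos ((Nat.choose_le_choose 2 (by omega :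
        #X + 1 ≤ 2 * k + 1)).trans ?_)
      rw [Nat.choose_two_right, show 2 * k + 1 - 1 = 2 * k by omega]
      exact (Nat.div_le_iff_le_mul_add_pred two_pos).2 (by nlinarith)

lemma card_le_of_exists_covering_tuple {V : Type*} [DecidableEq V] {k : ℕ}
    (𝒞 : Finset (Finset (Sym2 V))) (E : Finset (Sym2 V))
    (h𝒞 : ∀ A ∈ 𝒞, ∃ t : Fin k → Sym2 V, (∀ i, t i ∈ E) ∧ ∀ e ∈ A, ∀ v ∈ e, ∃ i, v ∈ t i) :
    #𝒞 ≤ 2 ^ (k * (2 * k + 1)) * #E ^ k := by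
  rcases 𝒞.eq_empty_or_nonempty with rfl | ⟨A₀, hA₀⟩
  · simp
  have : Nonempty (Fin k → Sym2 V) := ⟨(h𝒞 A₀ hA₀).choose⟩
  choose! t htE htcov using h𝒞
  have hb := card_le_mul_card_image_of_maps_to (f := t)
    (t := Fintype.piFinset fun _ : Fin k => E)
    (fun A hA => Fintype.mem_piFinset.2 (htE A hA)) _
    (fun τ _ => card_le_of_forall_covered τ fun A hA => by
      obtain ⟨hA𝒞, rfl⟩ := mem_filter.1 hA
      exact htcov A hA𝒞)
  simpa using hb

/-- If `F` has `f` vertices, minimum degree at least one and matching number `ν(F)`, then any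
graph with `m` edges contains at most `C_F · m^(f - ν(F))` copies of `F`. -/
theorem stmt_6 {W : Type*} [Fintype W] (F : SimpleGraph W)
    (hmin : ∀ w : W, ∃ w', F.Adj w w') :
    ∃ C : ℝ, 0 < C ∧ ∀ (V : Type) [Fintype V] (G : SimpleGraph V),
      (copyCount F G : ℝ) ≤
        C * (G.edgeSet.ncard : ℝ) ^ (Fintype.card W - matchNum F) := by
  classical
  set k := Fintype.card W - matchNum F
  obtain ⟨σ, hσF, hσ⟩ := exists_edge_tuple_covering hmin
  refine ⟨2 ^ (k * (2 * k + 1)), by positivity, fun V _ G => ?_⟩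
  rw [copyCount, Set.ncard_eq_toFinset_card _ (Set.toFinite _),
    Set.ncard_eq_toFinset_card _ (Set.toFinite _)]
  exact_mod_cast card_le_of_exists_covering_tuple _ _ fun A hA => by
    obtain ⟨hAG, ⟨φ⟩⟩ := (Set.Finite.mem_toFinset _).1 hA
    obtain ⟨t, htA, ht⟩ := exists_edge_tuple_covering_of_iso hσF hσ φ
    exact ⟨t, fun i => (Set.Finite.mem_toFinset _).2 (hAG (htA i)), ht⟩
end

section
/- For every n ≥ 5, the Kneser graph K(n,2) is color-3-critical: (i) there exist 3 edges of K(n,2) whose deletion decreases the chromatic number from n-2 to n-3, and (ii) deleting any 2 vertices of K(n,2) leaves a graph of chromatic number n-2. -/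
/-!
Every colour class of a proper colouring of `K(n,2)` is an intersecting family of pairs, hence
either a star (all its pairs share a point) or contained in the three pairs of a 3-set. Deleting
the centre of a star class together with its colour keeps the colouring proper, so after
removing all star classes at most three pairs per colour remain, and `C(u,2) - 2 ≤ 3k` forces
`u ≤ k + 2`. The slack of two pairs accounts for the two deleted vertices.

For the upper bounds, colour a pair by `max(max A, j) - j`: equal colours mean a shared maximum
unless both pairs lie in `{0,…,j}`. With `j = 2` there are no disjoint pairs below `j`; with
`j = 3` the disjoint pairs below `j` are the three perfect matchings of `{0,1,2,3}`, which are the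
deleted edges. Each of these contains the point `0`, so `K(n-1,2)`, placed on `{1,…,n-1}`,
survives the deletion and gives the lower bound.
-/

/-- The Kneser graph `K(n,2)`: vertices are the 2-element subsets of `{1,…,n}`, with two
vertices adjacent iff the corresponding sets are disjoint. -/
def kneser (n : ℕ) : SimpleGraph {s : Finset (Fin n) // s.card = 2} where
  Adj A B := A ≠ B ∧ Disjoint A.1 B.1
  symm := ⟨fun _ _ h => ⟨h.1.symm, h.2.symm⟩⟩
  loopless := ⟨fun _ h => h.1 rfl⟩

open Finset SimpleGraph

theorem Nat.le_add_two_of_choose_two_le {u k : ℕ} (h : u.choose 2 ≤ 3 * k + 2) : u ≤ k + 2 := by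
  by_contra! hu
  have hk : (k + 3).choose 2 ≤ u.choose 2 := Nat.choose_le_choose 2 hu
  simp only [Nat.choose_succ_succ', Nat.choose_zero_right, zero_add, Nat.choose_one_right,
    Nat.reduceAdd] at hk
  omega

namespace Finset

variable {α : Type*} [DecidableEq α]

theorem exists_eq_pair_of_mem {s : Finset α} {x : α} (hs : #s = 2) (hx : x ∈ s) :
    ∃ y, x ≠ y ∧ s = {x, y} := by
  obtain ⟨a, b, hab, rfl⟩ := card_eq_two.1 hs
  obtain rfl | rfl := by simpa using hx
  · exact ⟨b, hab, rfl⟩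
  · exact ⟨a, hab.symm, pair_comm a x⟩

theorem mem_of_not_disjoint_pair {a b : α} {s : Finset α} (h : ¬Disjoint {a, b} s)
    (ha : a ∉ s) : b ∈ s := by
  grind [disjoint_left]

/-- Such a family consists of pairs of a single 3-set. -/
theorem card_le_three_of_intersecting {𝒜 : Finset (Finset α)} (h2 : ∀ A ∈ 𝒜, #A = 2)
    (h𝒜 : (𝒜 : Set (Finset α)).Intersecting) (hstar : ∀ p, ∃ A ∈ 𝒜, p ∉ A) : #𝒜 ≤ 3 := by
  obtain rfl | ⟨A, hA⟩ := 𝒜.eq_empty_or_nonempty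
  · simp
  obtain ⟨a, b, hab, rfl⟩ := card_eq_two.1 (h2 A hA)
  obtain ⟨B, hB, haB⟩ := hstar a
  obtain ⟨e, hbe, rfl⟩ :=
    exists_eq_pair_of_mem (h2 B hB) (mem_of_not_disjoint_pair (h𝒜 hA hB) haB)
  obtain ⟨D, hD, hbD⟩ := hstar b
  have haD : a ∈ D := mem_of_not_disjoint_pair (pair_comm a b ▸ h𝒜 hA hD) hbD
  have heD : e ∈ D := mem_of_not_disjoint_pair (h𝒜 hB hD) hbD
  obtain ⟨f, haf, rfl⟩ := exists_eq_pair_of_mem (h2 D hD) haD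
  have hsub : 𝒜 ⊆ ({a, b, e} : Finset α).powersetCard 2 := by
    intro C hC
    obtain ⟨t, w, htw, rfl⟩ := card_eq_two.1 (h2 C hC)
    have hCA := h𝒜 hC hA
    have hCB := h𝒜 hC hB
    have hCD := h𝒜 hC hD
    simp only [disjoint_left] at hCA hCB hCD
    simp only [mem_powersetCard, card_pair htw, and_true]
    grind
  calc #𝒜 ≤ #(({a, b, e} : Finset α).powersetCard 2) := card_le_card hsub
    _ ≤ (3 : ℕ).choose 2 := by
      rw [card_powersetCard]
      exact Nat.choose_le_choose 2 card_le_three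

theorem card_le_card_add_two_of_cover {κ : Type*} [DecidableEq κ] {F : κ → Finset (Finset α)}
    (hF2 : ∀ i, ∀ A ∈ F i, #A = 2) (hF : ∀ i, (F i : Set (Finset α)).Intersecting)
    {R : Finset (Finset α)} (hR : #R ≤ 2) (K : Finset κ) (U : Finset α)
    (hcover : ∀ A ∈ U.powersetCard 2 \ R, ∃ i ∈ K, A ∈ F i) : #U ≤ #K + 2 := by
  induction K using Finset.strongInduction generalizing U with | H K ih => ?_
  by_cases hstar : ∃ i ∈ K, ∃ p, ∀ A ∈ F i, p ∈ A
  · obtain ⟨i, hi, p, hp⟩ := hstar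
    have hcover' : ∀ A ∈ (U.erase p).powersetCard 2 \ R, ∃ j ∈ K.erase i, A ∈ F j := by
      intro A hA
      obtain ⟨hAU, hAR⟩ := mem_sdiff.1 hA
      obtain ⟨j, hj, hAj⟩ :=
        hcover A (mem_sdiff.2 ⟨powersetCard_mono (erase_subset p U) hAU, hAR⟩)
      refine ⟨j, mem_erase.2 ⟨?_, hj⟩, hAj⟩
      rintro rfl
      exact notMem_erase p U ((mem_powersetCard.1 hAU).1 (hp A hAj))
    have := ih _ (erase_ssubset hi) _ hcover'
    have := pred_card_le_card_erase (s := U) (a := p)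
    have := card_erase_of_mem hi
    have := card_pos.2 ⟨i, hi⟩
    omega
  · push Not at hstar
    apply Nat.le_add_two_of_choose_two_le
    calc (#U).choose 2 ≤ #(U.powersetCard 2 \ R) + 2 := by
          have := le_card_sdiff R (U.powersetCard 2)
          rw [card_powersetCard] at this
          omega
      _ ≤ #(K.biUnion F) + 2 := by
          gcongr
          intro A hA
          obtain ⟨i, hi, hAi⟩ := hcover A hA
          exact mem_biUnion.2 ⟨i, hi, hAi⟩
      _ ≤ ∑ i ∈ K, #(F i) + 2 := by
          gcongr
          exact card_biUnion_le
      _ ≤ ∑ _i ∈ K, 3 + 2 := by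
          gcongr with i hi
          exact card_le_three_of_intersecting (hF2 i) (hF i) (hstar i hi)
      _ = 3 * #K + 2 := by rw [sum_const, smul_eq_mul, mul_comm]

end Finset

theorem SimpleGraph.chromaticNumber_eq_of_colorable_of_not_colorable {V : Type*}
    {G : SimpleGraph V} {k : ℕ} (hk : 0 < k) (h : G.Colorable k) (h' : ¬G.Colorable (k - 1)) :
    G.chromaticNumber = k := by
  obtain ⟨j, rfl⟩ := Nat.exists_eq_add_one_of_ne_zero hk.ne'
  exact_mod_cast chromaticNumber_eq_iff_colorable_not_colorable.2 ⟨h, h'⟩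

variable {n : ℕ}

instance kneserDecidableRelAdj : DecidableRel (kneser n).Adj :=
  fun A B => inferInstanceAs (Decidable (A ≠ B ∧ Disjoint A.1 B.1))

def kneserMap {m : ℕ} (f : Fin m ↪ Fin n) : kneser m ↪g kneser n where
  toFun A := ⟨A.1.map f, by rw [card_map, A.2]⟩
  inj' A B h := Subtype.ext (map_injective f (congrArg Subtype.val h))
  map_rel_iff' {A B} := by
    change (_ ≠ _ ∧ Disjoint (A.1.map f) (B.1.map f)) ↔ A ≠ B ∧ Disjoint A.1 B.1
    simp [Subtype.ext_iff]

@[simp]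
theorem coe_kneserMap {m : ℕ} (f : Fin m ↪ Fin n) (A : {s : Finset (Fin m) // s.card = 2}) :
    (kneserMap f A).1 = A.1.map f :=
  rfl

theorem not_colorable_induce_kneser {m : ℕ} (hm : m + 3 ≤ n)
    {S : Finset {s : Finset (Fin n) // s.card = 2}} (hS : #S ≤ 2) :
    ¬((kneser n).induce {v | v ∉ S}).Colorable m := by
  classical
  rintro ⟨C⟩
  let F (i : Fin m) : Finset (Finset (Fin n)) := (univ.filter fun v => C v = i).image fun v => v.1.1
  have hF2 (i : Fin m) : ∀ A ∈ F i, #A = 2 := by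
    simp only [F, mem_image]
    rintro _ ⟨v, -, rfl⟩
    exact v.1.2
  have hF (i : Fin m) : (F i : Set (Finset (Fin n))).Intersecting := by
    intro A hA B hB hAB
    obtain ⟨v, hv, rfl⟩ := mem_image.1 (mem_coe.1 hA)
    obtain ⟨w, hw, rfl⟩ := mem_image.1 (mem_coe.1 hB)
    have hne : v.1 ≠ w.1 := by
      intro h
      have hempty : w.1.1 = ∅ := disjoint_self_iff_empty _ |>.1 (h ▸ hAB)
      simpa [hempty] using w.1.2
    exact C.valid ⟨hne, hAB⟩ ((mem_filter.1 hv).2.trans (mem_filter.1 hw).2.symm)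
  have hcover : ∀ A ∈ (univ : Finset (Fin n)).powersetCard 2 \ S.image Subtype.val,
      ∃ i ∈ univ, A ∈ F i := by
    intro A hA
    simp only [mem_sdiff, mem_powersetCard, subset_univ, true_and, mem_image, not_exists,
      not_and] at hA
    obtain ⟨hA2, hAS⟩ := hA
    have hv : (⟨A, hA2⟩ : {s : Finset (Fin n) // s.card = 2}) ∉ S := fun h => hAS _ h rfl
    exact ⟨C ⟨_, hv⟩, mem_univ _, mem_image.2 ⟨⟨_, hv⟩, by simp, rfl⟩⟩
  have := card_le_card_add_two_of_cover hF2 hF (card_image_le.trans hS) univ univ hcover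
  simp only [card_univ, Fintype.card_fin] at this
  omega

theorem not_colorable_kneser {m : ℕ} (hm : m + 3 ≤ n) : ¬(kneser n).Colorable m := fun h =>
  not_colorable_induce_kneser hm (S := ∅) (by simp) (h.of_hom (Embedding.induce _).toHom)

theorem colorable_of_le_kneser {G : SimpleGraph {s : Finset (Fin n) // s.card = 2}}
    (hG : G ≤ kneser n) (j : Fin n) (hj : ∀ A B, G.Adj A B → ¬A.1 ∪ B.1 ⊆ Iic j) :
    G.Colorable (n - j) := by
  have hne (A : {s : Finset (Fin n) // s.card = 2}) : A.1.Nonempty := card_pos.1 (by omega)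
  refine ⟨Coloring.mk (fun A => ⟨(A.1.max' (hne A) : ℕ) - j, by omega⟩) ?_⟩
  intro A B hAB hc
  have hmax : A.1.max' (hne A) ≤ j ∧ B.1.max' (hne B) ≤ j ∨
      A.1.max' (hne A) = B.1.max' (hne B) := by
    simp only [Fin.mk.injEq] at hc
    simp only [Fin.le_def, Fin.ext_iff]
    omega
  rcases hmax with ⟨hA, hB⟩ | hAB'
  · refine hj A B hAB (union_subset ?_ ?_) <;> intro x hx <;> rw [mem_Iic]
    · exact (le_max' _ x hx).trans hA
    · exact (le_max' _ x hx).trans hB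
  · exact disjoint_left.1 (hG hAB).2 (max'_mem _ _) (by rw [hAB']; exact max'_mem _ _)

theorem colorable_kneser (hn : 3 ≤ n) : (kneser n).Colorable (n - 2) := by
  refine colorable_of_le_kneser le_rfl ⟨2, by omega⟩ fun A B hAB hsub => ?_
  have := card_le_card hsub
  rw [card_union_of_disjoint hAB.2, A.2, B.2, Fin.card_Iic, Fin.val_mk] at this
  omega

theorem chromaticNumber_kneser (hn : 3 ≤ n) : (kneser n).chromaticNumber = (n - 2 : ℕ) :=
  chromaticNumber_eq_of_colorable_of_not_colorable (by omega) (colorable_kneser hn)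
    (not_colorable_kneser (by omega))

theorem chromaticNumber_induce_kneser (hn : 3 ≤ n)
    {S : Finset {s : Finset (Fin n) // s.card = 2}} (hS : #S ≤ 2) :
    ((kneser n).induce {v | v ∉ S}).chromaticNumber = (n - 2 : ℕ) :=
  chromaticNumber_eq_of_colorable_of_not_colorable (by omega)
    ((colorable_kneser hn).of_hom (Embedding.induce _).toHom)
    (not_colorable_induce_kneser (by omega) hS)

def kneserFourEdges (h : 4 ≤ n) : Finset (Sym2 {s : Finset (Fin n) // s.card = 2}) :=
  (kneser 4).edgeFinset.map (kneserMap (Fin.castLEEmb h)).toEmbedding.sym2Map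

theorem kneserFourEdges_subset (h : 4 ≤ n) : ↑(kneserFourEdges h) ⊆ (kneser n).edgeSet := by
  intro e he
  obtain ⟨e', he', rfl⟩ := mem_map.1 he
  exact (Embedding.map_mem_edgeSet_iff (kneserMap _)).2 (mem_edgeFinset.1 he')

theorem card_kneserFourEdges (h : 4 ≤ n) : #(kneserFourEdges h) = 3 := by
  rw [kneserFourEdges, card_map]
  decide

theorem exists_zero_mem_of_mem_kneserFourEdges (h : 4 ≤ n) {e} (he : e ∈ kneserFourEdges h) :
    ∃ A ∈ e, (⟨0, by omega⟩ : Fin n) ∈ A.1 := by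
  obtain ⟨e', he', rfl⟩ := mem_map.1 he
  induction e' using Sym2.ind with | h A B => ?_
  have hzero : ∀ A B : {s : Finset (Fin 4) // s.card = 2}, (kneser 4).Adj A B →
      0 ∈ A.1 ∨ 0 ∈ B.1 := by decide
  rcases hzero A B (mem_edgeFinset.1 he') with hA | hB
  · exact ⟨_, Sym2.mem_mk_left _ _, mem_map_of_mem _ hA⟩
  · exact ⟨_, Sym2.mem_mk_right _ _, mem_map_of_mem _ hB⟩

theorem mk_mem_kneserFourEdges (h : 4 ≤ n) {A B} (hAB : (kneser n).Adj A B)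
    (hsub : A.1 ∪ B.1 ⊆ Iic ⟨3, by omega⟩) : s(A, B) ∈ kneserFourEdges h := by
  have hrange : Iic (⟨3, by omega⟩ : Fin n) ⊆ univ.map (Fin.castLEEmb h) := by
    intro x hx
    simp only [mem_Iic, Fin.le_def] at hx
    exact mem_map.2 ⟨⟨x, by omega⟩, mem_univ _, rfl⟩
  have hpre (C : {s : Finset (Fin n) // s.card = 2}) (hC : C.1 ⊆ Iic ⟨3, by omega⟩) :
      ∃ C', kneserMap (Fin.castLEEmb h) C' = C := by
    obtain ⟨C', -, hC'⟩ := subset_map_iff.1 (hC.trans hrange)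
    exact ⟨⟨C', by rw [← card_map (Fin.castLEEmb h), ← hC', C.2]⟩, Subtype.ext hC'.symm⟩
  obtain ⟨A', rfl⟩ := hpre A (subset_union_left.trans hsub)
  obtain ⟨B', rfl⟩ := hpre B (subset_union_right.trans hsub)
  have hA'B' : (kneser 4).Adj A' B' := (kneserMap _).map_adj_iff.1 hAB
  exact mem_map_of_mem _ (mem_edgeFinset.2 ((kneser 4).mem_edgeSet.2 hA'B'))

theorem colorable_deleteEdges_kneserFourEdges (h : 4 ≤ n) :
    ((kneser n).deleteEdges (kneserFourEdges h)).Colorable (n - 3) :=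
  colorable_of_le_kneser (deleteEdges_le _) ⟨3, by omega⟩ fun _ _ hAB hsub =>
    ((deleteEdges_adj ..).1 hAB).2 (mk_mem_kneserFourEdges h ((deleteEdges_adj ..).1 hAB).1 hsub)

theorem not_colorable_deleteEdges_kneserFourEdges (h : 4 ≤ n) {m : ℕ} (hm : m + 4 ≤ n) :
    ¬((kneser n).deleteEdges (kneserFourEdges h)).Colorable m := by
  obtain ⟨k, rfl⟩ : ∃ k, n = k + 1 := ⟨n - 1, by omega⟩
  have hzero (A : {s : Finset (Fin k) // s.card = 2}) :
      (⟨0, by omega⟩ : Fin (k + 1)) ∉ (kneserMap (Fin.succEmb k) A).1 := by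
    simp [Fin.ext_iff]
  let g : kneser k →g (kneser (k + 1)).deleteEdges (kneserFourEdges h) :=
    { toFun := kneserMap (Fin.succEmb k)
      map_rel' := fun {A B} hAB => (deleteEdges_adj ..).2
        ⟨(kneserMap _).map_adj_iff.2 hAB, fun he => by
          obtain ⟨C, hC, h0⟩ := exists_zero_mem_of_mem_kneserFourEdges h he
          rcases Sym2.mem_iff.1 hC with rfl | rfl
          exacts [hzero A h0, hzero B h0]⟩ }
  exact fun hcol => not_colorable_kneser (by omega) (hcol.of_hom g)

theorem chromaticNumber_deleteEdges_kneserFourEdges (h : 4 ≤ n) :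
    ((kneser n).deleteEdges (kneserFourEdges h)).chromaticNumber = (n - 3 : ℕ) :=
  chromaticNumber_eq_of_colorable_of_not_colorable (by omega)
    (colorable_deleteEdges_kneserFourEdges h)
    (not_colorable_deleteEdges_kneserFourEdges h (by omega))

/-- For `n ≥ 5`, the Kneser graph `K(n,2)` is color-3-critical: it has chromatic number `n-2`,
there are 3 edges whose deletion decreases the chromatic number to `n-3`, and deleting any
2 vertices leaves a graph of chromatic number `n-2`. -/
theorem stmt_8 (n : ℕ) (hn : 5 ≤ n) :
    (kneser n).chromaticNumber = ((n - 2 : ℕ) : ℕ∞) ∧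
    (∃ E : Finset (Sym2 {s : Finset (Fin n) // s.card = 2}),
      ↑E ⊆ (kneser n).edgeSet ∧ E.card = 3 ∧
      ((kneser n).deleteEdges ↑E).chromaticNumber = ((n - 3 : ℕ) : ℕ∞)) ∧
    (∀ S : Finset {s : Finset (Fin n) // s.card = 2}, S.card = 2 →
      ((kneser n).induce {v | v ∉ S}).chromaticNumber = ((n - 2 : ℕ) : ℕ∞)) := by
  have h4 : 4 ≤ n := by omega
  exact ⟨chromaticNumber_kneser (by omega),
    ⟨kneserFourEdges h4, kneserFourEdges_subset h4, card_kneserFourEdges h4,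
      chromaticNumber_deleteEdges_kneserFourEdges h4⟩,
    fun S hS => chromaticNumber_induce_kneser (by omega) hS.le⟩
end

section
/- For n ≥ 6, every critical subset X of the Kneser graph K = K(n,2) (i.e., a 3-element set X of vertices with χ(K - X) = n - 3) is an independent set in K. -/
open Finset

namespace Finset

variable {α : Type*} [DecidableEq α]

lemma eq_pair_of_card_eq_two {s : Finset α} {a b : α} (hs : s.card = 2) (ha : a ∈ s) (hb : b ∈ s)
    (hab : a ≠ b) : s = {a, b} :=
  (eq_of_subset_of_card_le (by simp [insert_subset_iff, ha, hb]) (by rw [hs, card_pair hab])).symm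

lemma subset_of_not_disjoint_pairs {z : Finset α} {a b c : α} (hz : z.card = 2)
    (hab : a ≠ b) (hbc : b ≠ c) (hac : a ≠ c) (h₁ : ¬Disjoint z {a, b})
    (h₂ : ¬Disjoint z {b, c}) (h₃ : ¬Disjoint z {a, c}) : z ⊆ {a, b, c} := by
  obtain ⟨e, f, -, rfl⟩ := card_eq_two.mp hz
  simp only [disjoint_insert_right, disjoint_singleton_right, mem_insert, mem_singleton,
    not_and_or, not_not] at h₁ h₂ h₃
  intro x hx
  simp only [mem_insert, mem_singleton] at hx ⊢
  grind

lemma intersecting_powersetCard {s : Finset α} {k : ℕ} (h : s.card < 2 * k) :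
    (s.powersetCard k : Set (Finset α)).Intersecting := by
  intro A hA B hB hAB
  rw [mem_coe, mem_powersetCard] at hA hB
  have := card_le_card (union_subset hA.1 hB.1)
  rw [card_union_of_disjoint hAB, hA.2, hB.2] at this
  omega

lemma intersecting_of_forall_pair_mem {R : Finset α} {X : Finset (Finset α)} {p : α}
    (hR : R.card = 4) (hp : p ∈ R) (hX : X.card ≤ 3) (h : ∀ r ∈ R, r ≠ p → {p, r} ∈ X) :
    (X : Set (Finset α)).Intersecting := by
  have hinj : Set.InjOn (fun r => ({p, r} : Finset α)) (R.erase p) := by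
    intro r hr r' _ hrr'
    have : r ∈ ({p, r'} : Finset α) := by
      rw [← show ({p, r} : Finset α) = {p, r'} from hrr']
      exact mem_insert_of_mem (mem_singleton_self r)
    simp only [mem_insert, mem_singleton] at this
    exact this.resolve_left (ne_of_mem_erase hr)
  have hstar : (R.erase p).image (fun r => {p, r}) = X := by
    refine eq_of_subset_of_card_le ?_ ?_
    · simp only [image_subset_iff, mem_erase]
      exact fun r hr => h r hr.2 hr.1
    · rw [card_image_of_injOn hinj, card_erase_of_mem hp, hR]
      exact hX
  rw [← hstar]
  intro A hA B hB hAB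
  simp only [coe_image, Set.mem_image] at hA hB
  obtain ⟨r, -, rfl⟩ := hA
  obtain ⟨r', -, rfl⟩ := hB
  exact disjoint_left.mp hAB (mem_insert_self p {r}) (mem_insert_self p {r'})

end Finset

theorem Set.Intersecting.exists_forall_mem_or_subset_card_le_three {α : Type*} [DecidableEq α]
    {F : Set (Finset α)} (hF : F.Intersecting) (hF2 : ∀ s ∈ F, s.card = 2) :
    (∃ x, ∀ s ∈ F, x ∈ s) ∨ ∃ T : Finset α, T.card ≤ 3 ∧ ∀ s ∈ F, s ⊆ T := by
  rcases F.eq_empty_or_nonempty with rfl | ⟨v, hv⟩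
  · exact Or.inr ⟨∅, by simp, by simp⟩
  obtain ⟨a, b, hab, rfl⟩ := card_eq_two.mp (hF2 v hv)
  by_contra! hstar
  obtain ⟨w, hw, haw⟩ := hstar.1 a
  obtain ⟨u, hu, hbu⟩ := hstar.1 b
  have hbw : b ∈ w := by simpa [disjoint_insert_right, haw] using hF hw hv
  have hau : a ∈ u := by simpa [disjoint_insert_right, hbu] using hF hu hv
  obtain ⟨c, hcw, hcb⟩ := exists_mem_ne (by rw [hF2 w hw]; norm_num) b
  have hca : c ≠ a := by rintro rfl; exact haw hcw
  have hw' : w = {b, c} := eq_pair_of_card_eq_two (hF2 w hw) hbw hcw hcb.symm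
  have hcu : c ∈ u := by simpa [disjoint_insert_right, hw', hbu] using hF hu hw
  have hu' : u = {a, c} := eq_pair_of_card_eq_two (hF2 u hu) hau hcu hca.symm
  obtain ⟨z, hz, hzT⟩ := hstar.2 {a, b, c} card_le_three
  exact hzT (subset_of_not_disjoint_pairs (hF2 z hz) hab hcb.symm hca.symm (hF hz hv)
    (hw' ▸ hF hz hw) (hu' ▸ hF hz hu))

lemma Nat.le_four_of_choose_two_le {m k : ℕ} (hkm : k + 3 ≤ m) (h : m.choose 2 ≤ 3 * k + 3) :
    m ≤ 4 := by
  rw [Nat.choose_two_right, Nat.div_le_iff_le_mul_add_pred two_pos] at h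
  by_contra! hm
  obtain ⟨j, rfl⟩ : ∃ j, m = j + 5 := ⟨m - 5, by omega⟩
  norm_num at h
  nlinarith

lemma Finset.intersecting_of_powersetCard_two_subset {α ι : Type*} [DecidableEq α]
    {R : Finset α} {K : Finset ι} {T : ι → Finset α} {X : Finset (Finset α)}
    (hKR : K.card + 3 ≤ R.card) (hT : ∀ i ∈ K, (T i).card ≤ 3) (hX : X.card ≤ 3)
    (hcover : ∀ s ∈ R.powersetCard 2, s ∈ X ∨ ∃ i ∈ K, s ⊆ T i) :
    (X : Set (Finset α)).Intersecting := by
  have hcount : R.card.choose 2 ≤ 3 * K.card + 3 := calc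
    R.card.choose 2 = (R.powersetCard 2).card := (card_powersetCard _ _).symm
    _ ≤ (X ∪ K.biUnion fun i => (T i).powersetCard 2).card := by
      refine card_le_card fun s hs => ?_
      rcases hcover s hs with hsX | ⟨i, hi, hsT⟩
      · exact mem_union_left _ hsX
      · exact mem_union_right _ (mem_biUnion.mpr
          ⟨i, hi, mem_powersetCard.mpr ⟨hsT, (mem_powersetCard.mp hs).2⟩⟩)
    _ ≤ X.card + ∑ i ∈ K, ((T i).powersetCard 2).card :=
      (card_union_le _ _).trans (Nat.add_le_add_left card_biUnion_le _)
    _ ≤ 3 + ∑ _i ∈ K, 3 := by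
      refine Nat.add_le_add hX (sum_le_sum fun i hi => ?_)
      rw [card_powersetCard]
      exact (Nat.choose_le_choose 2 (hT i hi)).trans (by decide)
    _ = 3 * K.card + 3 := by rw [sum_const, smul_eq_mul]; ring
  obtain hR | hR : R.card = 3 ∨ R.card = 4 := by
    have := Nat.le_four_of_choose_two_le hKR hcount
    omega
  · have hK : K = ∅ := card_eq_zero.mp (by omega)
    have hpairs : R.powersetCard 2 ⊆ X := fun s hs => by simpa [hK] using hcover s hs
    rw [← eq_of_subset_of_card_le hpairs (by rw [card_powersetCard, hR]; exact hX)]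
    exact intersecting_powersetCard (k := 2) (by omega)
  · have hU : (K.biUnion T).card < R.card := calc
      (K.biUnion T).card ≤ ∑ i ∈ K, (T i).card := card_biUnion_le
      _ ≤ ∑ _i ∈ K, 3 := sum_le_sum hT
      _ < R.card := by rw [sum_const, smul_eq_mul]; omega
    obtain ⟨p, hpR, hpU⟩ := exists_mem_notMem_of_card_lt_card hU
    refine intersecting_of_forall_pair_mem hR hpR hX fun r hr hrp => ?_
    refine (hcover {p, r} (mem_powersetCard.mpr ⟨?_, card_pair hrp.symm⟩)).resolve_right ?_
    · simp [insert_subset_iff, hpR, hr]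
    · rintro ⟨i, hi, hpr⟩
      exact hpU (mem_biUnion.mpr ⟨i, hi, hpr (mem_insert_self p {r})⟩)

theorem Finset.intersecting_of_intersecting_cover {α ι : Type*} [Fintype α] [DecidableEq α]
    [Fintype ι] (hcard : Fintype.card ι + 3 ≤ Fintype.card α) {F : ι → Set (Finset α)}
    (hF : ∀ i, (F i).Intersecting) (hF2 : ∀ i, ∀ s ∈ F i, s.card = 2) {X : Finset (Finset α)}
    (hX : X.card ≤ 3) (hcover : ∀ s : Finset α, s.card = 2 → s ∉ X → ∃ i, s ∈ F i) :
    (X : Set (Finset α)).Intersecting := by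
  classical
  have : Nonempty α := Fintype.card_pos_iff.mp (by omega)
  let S := univ.filter fun i => ∃ x, ∀ s ∈ F i, x ∈ s
  choose! center hcenter using fun i (hi : i ∈ S) => (mem_filter.mp hi).2
  choose! T hT using fun i (hi : i ∈ Sᶜ) =>
    ((hF i).exists_forall_mem_or_subset_card_le_three (hF2 i)).resolve_left
      (by simpa [S] using hi)
  refine intersecting_of_powersetCard_two_subset (R := univ \ S.image center) (K := Sᶜ)
    (T := T) ?_ (fun i hi => (hT i hi).1) hX fun s hs => ?_
  · rw [card_compl, card_sdiff_of_subset (subset_univ _), Finset.card_univ]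
    have := card_image_le (s := S) (f := center)
    have := card_le_univ S
    omega
  · by_cases hsX : s ∈ X
    · exact Or.inl hsX
    obtain ⟨hsR, hs2⟩ := mem_powersetCard.mp hs
    obtain ⟨i, hi⟩ := hcover s hs2 hsX
    by_cases hiS : i ∈ S
    · exact absurd (mem_image_of_mem center hiS) (mem_sdiff.mp (hsR (hcenter i hiS s hi))).2
    · exact Or.inr ⟨i, mem_compl.mpr hiS, (hT i (mem_compl.mpr hiS)).2 s hi⟩

/-- For `n ≥ 6`, every critical subset `X` of `K(n,2)` (a set of 3 vertices whose deletion
decreases the chromatic number to `n-3`) is an independent set. -/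
theorem stmt_10 (n : ℕ) (hn : 6 ≤ n)
    (X : Finset {s : Finset (Fin n) // s.card = 2}) (hX : X.card = 3)
    (hcrit : ((kneser n).induce {v | v ∉ X}).chromaticNumber = ((n - 3 : ℕ) : ℕ∞)) :
    ∀ A ∈ X, ∀ B ∈ X, ¬ (kneser n).Adj A B := by
  obtain ⟨C⟩ : ((kneser n).induce {v | v ∉ X}).Colorable (n - 3) := by
    rw [← SimpleGraph.chromaticNumber_le_iff_colorable, hcrit]
  let F (i : Fin (n - 3)) : Set (Finset (Fin n)) := (fun v => v.1.1) '' C.colorClass i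
  have hF : ∀ i, (F i).Intersecting := by
    rintro i _ ⟨v, hv, rfl⟩ _ ⟨w, hw, rfl⟩ hvw
    by_cases h : v = w
    · subst h
      exact (card_pos.mp (by rw [v.1.2]; norm_num)).ne_empty (disjoint_self.mp hvw)
    · exact C.valid (show (kneser n).Adj v.1 w.1 from ⟨fun e => h (Subtype.ext e), hvw⟩)
        (hv.trans hw.symm)
  have hX' := intersecting_of_intersecting_cover (F := F)
    (X := X.map (Function.Embedding.subtype _)) (by simp only [Fintype.card_fin]; omega) hF
    (by rintro i _ ⟨v, -, rfl⟩; exact v.1.2) (by rw [card_map, hX])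
    fun s hs hsX => ⟨C ⟨⟨s, hs⟩, fun h => hsX (mem_map_of_mem _ h)⟩, _, rfl, rfl⟩
  intro A hA B hB hAB
  exact hX' (mem_map_of_mem _ hA) (mem_map_of_mem _ hB) hAB.2
end

section
/- Let k ≥ 2 and let F = M_k + (P₄ ∪ M_{k-2}) be the join of a matching of size k with the disjoint union of a path on 4 vertices and a matching of size k-2. Then χ(F) = 4, F is color-k-critical, and removing the k edges of the first matching M_k decreases the chromatic number to 3. -/
open SimpleGraph

/-- The join `G + H` of two graphs: their disjoint union together with all edges between them. -/
def joinG {α β : Type*} (G : SimpleGraph α) (H : SimpleGraph β) : SimpleGraph (α ⊕ β) where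
  Adj u v := match u, v with
    | Sum.inl a, Sum.inl b => G.Adj a b
    | Sum.inr a, Sum.inr b => H.Adj a b
    | _, _ => True
  symm := by
    constructor
    intro u v h
    cases u <;> cases v <;> first | exact G.adj_symm h | exact H.adj_symm h | trivial
  loopless := by
    constructor
    intro u
    cases u with
    | inl a => exact G.irrefl
    | inr a => exact H.irrefl

/-- The matching `M_k` with `k` edges, realised on `Fin k × Fin 2`. -/
def matchingGraph (k : ℕ) : SimpleGraph (Fin k × Fin 2) where
  Adj u v := u.1 = v.1 ∧ u.2 ≠ v.2
  symm := ⟨fun _ _ h => ⟨h.1.symm, h.2.symm⟩⟩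
  loopless := ⟨fun _ h => h.2 rfl⟩


/-!
Colourings of `G` and `H` with disjoint palettes colour `G + H`, so `χ(F) ≤ 2 + 2`, and an edge
of `G` together with an edge of `H` spans a `K₄` in `G + H`. Both `M_k` and `P₄ ∪ M_{k-2}`
consist of `k` vertex-disjoint edges (for `P₄`, its first and last edge), so deleting fewer than
`k` vertices spares an edge on each side and hence a `K₄`. Deleting the edges of `M_k` leaves the
join of an edgeless graph with a bipartite one, which is `3`-colourable and contains a triangle.
-/

open Finset Function
open scoped Finset

theorem Finset.exists_forall_notMem_of_card_lt {ι κ V : Type*} [Fintype ι] {p : ι × κ → V}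
    (hp : Injective p) (S : Finset V) (hS : #S < Fintype.card ι) :
    ∃ a, ∀ i, p (a, i) ∉ S := by
  classical
  have hcard : #((S.preimage p hp.injOn).image Prod.fst) < #(univ : Finset ι) :=
    calc _ ≤ #(S.preimage p hp.injOn) := card_image_le
      _ ≤ #S := card_le_card_of_injOn p (fun x hx => mem_preimage.1 hx) hp.injOn
      _ < _ := hS
  obtain ⟨a, -, ha⟩ := exists_mem_notMem_of_card_lt_card hcard
  exact ⟨a, fun i hi => ha (mem_image.2 ⟨(a, i), mem_preimage.2 hi, rfl⟩)⟩

section joinG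

variable {α β : Type*} {G : SimpleGraph α} {H : SimpleGraph β}

def joinG.inlHom : G →g joinG G H := ⟨Sum.inl, id⟩

def joinG.induceHom (s : Set (α ⊕ β)) :
    joinG (G.induce (Sum.inl ⁻¹' s)) (H.induce (Sum.inr ⁻¹' s)) →g
      (joinG G H).induce s where
  toFun
    | .inl a => ⟨.inl a, a.2⟩
    | .inr b => ⟨.inr b, b.2⟩
  map_rel' {u v} h := by cases u <;> cases v <;> exact h

def SimpleGraph.Coloring.joinG {γ δ : Type*} (cG : G.Coloring γ) (cH : H.Coloring δ) :
    (joinG G H).Coloring (γ ⊕ δ) :=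
  Coloring.mk (Sum.map cG cH) fun {u v} h => by
    cases u <;> cases v
    · exact fun e => cG.valid h (Sum.inl_injective e)
    · exact Sum.inl_ne_inr
    · exact Sum.inr_ne_inl
    · exact fun e => cH.valid h (Sum.inr_injective e)

theorem SimpleGraph.Colorable.joinG {m n : ℕ} (hG : G.Colorable m) (hH : H.Colorable n) :
    (joinG G H).Colorable (m + n) := by
  obtain ⟨cG⟩ := hG
  obtain ⟨cH⟩ := hH
  simpa using (cG.joinG cH).colorable

theorem joinG_deleteEdges_image_inl_edgeSet :
    (joinG G H).deleteEdges (Sym2.map Sum.inl '' G.edgeSet) = joinG ⊥ H := by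
  ext u v
  rw [deleteEdges_adj]
  cases u with
  | inl a => cases v with
    | inl b => exact ⟨fun h => h.2 ⟨s(a, b), h.1, rfl⟩, False.elim⟩
    | inr b => simp [joinG, Sym2.exists]
  | inr b => cases v <;> simp [joinG, Sym2.exists]

theorem three_le_chromaticNumber_joinG (a : α) {b b' : β} (hb : H.Adj b b') :
    3 ≤ (joinG G H).chromaticNumber :=
  le_chromaticNumber_of_pairwise_adj (by simp) ![.inl a, .inr b, .inr b'] <| by
    intro i j hij
    fin_cases i <;> fin_cases j <;> simp_all [joinG, hb.symm]

theorem four_le_chromaticNumber_joinG {a a' : α} {b b' : β} (ha : G.Adj a a') (hb : H.Adj b b') :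
    4 ≤ (joinG G H).chromaticNumber :=
  le_chromaticNumber_of_pairwise_adj (by simp) ![.inl a, .inl a', .inr b, .inr b'] <| by
    intro i j hij
    fin_cases i <;> fin_cases j <;> simp_all [joinG, ha.symm, hb.symm]

end joinG

theorem four_le_chromaticNumber_induce_joinG {α β ι ι' : Type*} {G : SimpleGraph α}
    {H : SimpleGraph β} [Fintype ι] [Fintype ι']
    {p : ι × Fin 2 → α} (hp : Injective p) (hpG : ∀ i, G.Adj (p (i, 0)) (p (i, 1)))
    {q : ι' × Fin 2 → β} (hq : Injective q) (hqH : ∀ i, H.Adj (q (i, 0)) (q (i, 1)))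
    (S : Finset (α ⊕ β)) (hSp : #S < Fintype.card ι) (hSq : #S < Fintype.card ι') :
    4 ≤ ((joinG G H).induce {v | v ∉ S}).chromaticNumber := by
  obtain ⟨a, ha⟩ := S.exists_forall_notMem_of_card_lt (Sum.inl_injective.comp hp) hSp
  obtain ⟨b, hb⟩ := S.exists_forall_notMem_of_card_lt (Sum.inr_injective.comp hq) hSq
  exact (four_le_chromaticNumber_joinG (a := ⟨p (a, 0), ha 0⟩) (a' := ⟨p (a, 1), ha 1⟩)
    (b := ⟨q (b, 0), hb 0⟩) (b' := ⟨q (b, 1), hb 1⟩) (hpG a) (hqH b)).trans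
    (chromaticNumber_mono_of_hom (joinG.induceHom _))

section matchingGraph

variable (k : ℕ)

theorem matchingGraph_adj_zero_one (a : Fin k) : (matchingGraph k).Adj (a, 0) (a, 1) :=
  ⟨rfl, zero_ne_one⟩

theorem matchingGraph_colorable_two : (matchingGraph k).Colorable 2 :=
  ⟨Coloring.mk Prod.snd fun h => h.2⟩

theorem matchingGraph_edgeSet :
    (matchingGraph k).edgeSet = Set.range fun a => s((a, 0), (a, 1)) := by
  ext e
  refine Sym2.ind (fun u v => ?_) e
  obtain ⟨a, i⟩ := u
  obtain ⟨b, j⟩ := v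
  simp only [mem_edgeSet, matchingGraph, Set.mem_range, Sym2.eq_iff, Prod.mk.injEq]
  fin_cases i <;> fin_cases j <;> simp [eq_comm]

theorem coe_image_matchingEdges {β : Type*} [DecidableEq β] :
    (((univ : Finset (Fin k)).image fun a =>
        (s(Sum.inl (a, 0), Sum.inl (a, 1)) : Sym2 ((Fin k × Fin 2) ⊕ β))) :
      Set (Sym2 ((Fin k × Fin 2) ⊕ β))) = Sym2.map Sum.inl '' (matchingGraph k).edgeSet := by
  rw [matchingGraph_edgeSet, ← Set.range_comp]
  simp [comp_def]

theorem card_image_matchingEdges {β : Type*} [DecidableEq β] :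
    #((univ : Finset (Fin k)).image fun a =>
      (s(Sum.inl (a, 0), Sum.inl (a, 1)) : Sym2 ((Fin k × Fin 2) ⊕ β))) = k := by
  rw [card_image_of_injective _ fun a b h => by simpa [Sym2.eq_iff] using h, card_univ,
    Fintype.card_fin]

end matchingGraph

def pathGraphSumMatchingPairs (n : ℕ) : (Fin 2 ⊕ Fin n) × Fin 2 → Fin 4 ⊕ Fin n × Fin 2
  | (.inl j, i) => .inl ⟨2 * j + i, by omega⟩
  | (.inr a, i) => .inr (a, i)

theorem pathGraphSumMatchingPairs_injective (n : ℕ) :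
    Injective (pathGraphSumMatchingPairs n) := by
  rintro ⟨j | a, i⟩ ⟨j' | a', i'⟩ h <;>
    simp only [pathGraphSumMatchingPairs, Sum.inl.injEq, Sum.inr.injEq, reduceCtorEq,
      Prod.mk.injEq, Fin.ext_iff] at h ⊢
  all_goals omega

theorem pathGraphSumMatchingPairs_adj (n : ℕ) (i : Fin 2 ⊕ Fin n) :
    (pathGraph 4 ⊕g matchingGraph n).Adj (pathGraphSumMatchingPairs n (i, 0))
      (pathGraphSumMatchingPairs n (i, 1)) := by
  cases i with
  | inl j => simp [pathGraphSumMatchingPairs, pathGraph_adj]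
  | inr a => exact matchingGraph_adj_zero_one n a

/-- For `k ≥ 2`, the graph `F = M_k + (P₄ ∪ M_{k-2})` has chromatic number 4, removing the `k`
edges of the join part `M_k` decreases the chromatic number to 3, and deleting any `k-1`
vertices does not decrease the chromatic number; so `F` is color-`k`-critical. -/
theorem stmt_14 (k : ℕ) (hk : 2 ≤ k) :
    ∀ F : SimpleGraph ((Fin k × Fin 2) ⊕ (Fin 4 ⊕ Fin (k - 2) × Fin 2)),
    F = joinG (matchingGraph k) ((pathGraph 4) ⊕g matchingGraph (k - 2)) →
    ∀ EA : Finset (Sym2 ((Fin k × Fin 2) ⊕ (Fin 4 ⊕ Fin (k - 2) × Fin 2))),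
    EA = (Finset.univ : Finset (Fin k)).image
      (fun a => s(Sum.inl (a, (0 : Fin 2)), Sum.inl (a, (1 : Fin 2)))) →
    F.chromaticNumber = (4 : ℕ∞) ∧
    EA.card = k ∧ ↑EA ⊆ F.edgeSet ∧
    (F.deleteEdges ↑EA).chromaticNumber = (3 : ℕ∞) ∧
    (∀ S : Finset ((Fin k × Fin 2) ⊕ (Fin 4 ⊕ Fin (k - 2) × Fin 2)), S.card = k - 1 →
      F.chromaticNumber ≤ (F.induce {v | v ∉ S}).chromaticNumber) := by
  have hH : (pathGraph 4 ⊕g matchingGraph (k - 2)).Colorable 2 :=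
    colorable_sum.2 ⟨(pathGraph.bicoloring 4).colorable, matchingGraph_colorable_two _⟩
  have hP : (pathGraph 4 ⊕g matchingGraph (k - 2)).Adj (.inl 0) (.inl 1) := by
    simp [pathGraph_adj]
  have hχ :
      (joinG (matchingGraph k) (pathGraph 4 ⊕g matchingGraph (k - 2))).chromaticNumber = 4 :=
    le_antisymm ((matchingGraph_colorable_two k).joinG hH).chromaticNumber_le
      (four_le_chromaticNumber_joinG (matchingGraph_adj_zero_one k ⟨0, by omega⟩) hP)
  rintro _ rfl _ rfl
  refine ⟨hχ, card_image_matchingEdges k, ?_, ?_, fun S hS => hχ ▸ ?_⟩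
  · rw [coe_image_matchingEdges]
    rintro _ ⟨e, he, rfl⟩
    exact joinG.inlHom.map_mem_edgeSet he
  · rw [coe_image_matchingEdges, joinG_deleteEdges_image_inl_edgeSet]
    exact le_antisymm ((colorable_one_iff.2 rfl).joinG hH).chromaticNumber_le
      (three_le_chromaticNumber_joinG (⟨0, by omega⟩, 0) hP)
  · exact four_le_chromaticNumber_induce_joinG (p := id) injective_id
      (matchingGraph_adj_zero_one k) (pathGraphSumMatchingPairs_injective _)
      (pathGraphSumMatchingPairs_adj _) S
      (by rw [hS, Fintype.card_fin]; omega)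
      (by rw [hS, Fintype.card_sum, Fintype.card_fin, Fintype.card_fin]; omega)
end
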